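/- arXiv:2002.07497 — 3 statements merged into one kernel-verified Lean document; each statement's English description precedes it below -/
import Mathlib

section
/- Let G be a group acting by automorphisms on a group Γ, let φ ∈ Tr(Γ, G) and let γ ∈ Γ. If there exists a sequence (g_n)_{n≥1} in G such that φ((g_n • γ)·(g_m • γ)⁻¹) = 0 for all n ≠ m, then φ(γ) = 0. -/
open scoped ComplexOrder

/-- A function `φ : Γ → ℂ` on a group `Γ` is of positive type if for all `n`,
all `γ : Fin n → Γ` and all coefficients `c : Fin n → ℂ`, the sum
`∑ i j, c i * conj (c j) * φ ((γ j)⁻¹ * γ i)` is a nonnegative real number. -/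
def IsPosType {Γ : Type*} [Group Γ] (φ : Γ → ℂ) : Prop :=
  ∀ (n : ℕ) (γ : Fin n → Γ) (c : Fin n → ℂ),
    0 ≤ ∑ i, ∑ j, c i * (starRingEnd ℂ) (c j) * φ ((γ j)⁻¹ * γ i)

/-- A `G`-invariant trace on `Γ`. -/
def IsInvTrace (G : Type*) {Γ : Type*} [Group G] [Group Γ] [MulDistribMulAction G Γ]
    (φ : Γ → ℂ) : Prop :=
  IsPosType φ ∧ (∀ (g : G) (γ : Γ), φ (g • γ) = φ γ) ∧ φ 1 = 1

/-- A positive-type function with `φ 1 = 1` is hermitian: `φ x⁻¹ = conj (φ x)`. -/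
lemma herm_aux {Γ : Type*} [Group Γ] {φ : Γ → ℂ} (hp : IsPosType φ) (h1 : φ 1 = 1) (x : Γ) :
    φ x⁻¹ = (starRingEnd ℂ) (φ x) := by
  have H := fun c => hp 2 ![1, x] ![1, c]
  have hA := H 1
  have hB := H Complex.I
  simp [Fin.sum_univ_two, h1] at hA hB
  rw [Complex.le_def] at hA hB
  obtain ⟨hA1, hA2⟩ := hA
  obtain ⟨hB1, hB2⟩ := hB
  simp [Complex.add_im, Complex.add_re, Complex.mul_im, Complex.mul_re] at hA2 hB2
  apply Complex.ext <;> simp <;> linarith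

theorem stmt3 {G Γ : Type*} [Group G] [Group Γ] [MulDistribMulAction G Γ]
    (φ : Γ → ℂ) (hφ : IsInvTrace G φ) (γ : Γ) (g : ℕ → G)
    (h : ∀ n m : ℕ, n ≠ m → φ ((g n • γ) * (g m • γ)⁻¹) = 0) :
    φ γ = 0 := by
  obtain ⟨hp, hinv, h1⟩ := hφ
  set a := φ γ with ha
  have key : ∀ n : ℕ, (n : ℝ) * Complex.normSq a ≤ 1 := by
    intro n
    let x : Fin (n+1) → Γ := Fin.cons 1 fun i => (g i • γ)⁻¹
    let c : Fin (n+1) → ℂ := Fin.cons 1 fun _ => -a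
    have H := hp (n+1) x c
    have hdiag : ∀ i : Fin n, ∑ j : Fin n,
        -a * -(starRingEnd ℂ) a * φ ((g j • γ) * (g i • γ)⁻¹) = a * (starRingEnd ℂ) a := by
      intro i
      rw [Finset.sum_eq_single i]
      · simp [h1]
      · intro j _ hj
        rw [h j i (fun hc => hj (Fin.ext hc))]; ring
      · simp
    have hval : ∑ i, ∑ j, c i * (starRingEnd ℂ) (c j) * φ ((x j)⁻¹ * x i)
        = 1 - n * (a * (starRingEnd ℂ) a) := by
      simp only [Fin.sum_univ_succ, x, c, Fin.cons_zero, Fin.cons_succ, map_one, map_neg,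
        one_mul, mul_one, inv_one, h1, inv_inv, herm_aux hp h1, hinv]
      simp only [hdiag, ← ha, Finset.sum_const, Finset.card_univ, Fintype.card_fin,
        nsmul_eq_mul]
      ring
    rw [hval, Complex.mul_conj] at H
    have : (0:ℝ) ≤ 1 - n * Complex.normSq a := by
      have := (Complex.le_def.mp H).1
      simpa using this
    linarith
  have hsq : Complex.normSq a = 0 := by
    by_contra hne
    have hpos : 0 < Complex.normSq a := lt_of_le_of_ne (Complex.normSq_nonneg a) (Ne.symm hne)
    obtain ⟨n, hn⟩ := exists_nat_gt (1 / Complex.normSq a)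
    have : 1 < (n : ℝ) * Complex.normSq a := by
      rw [div_lt_iff₀ hpos] at hn
      linarith
    linarith [key n]
  exact Complex.normSq_eq_zero.mp hsq
end

section
/- Let G be a group acting by automorphisms on a group Γ and let φ ∈ Char(Γ, G). Then the G-center Z(Γ)^G = {z ∈ Z(Γ) : g • z = z for all g ∈ G} (where Z(Γ) is the center of Γ) is contained in P_φ = {γ ∈ Γ : |φ(γ)| = 1}; that is, |φ(z)| = 1 for every central element z of Γ fixed by all of G. -/
open scoped ComplexOrder

/-- A `G`-invariant character on `Γ`: an extreme point of the set of `G`-invariant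
traces. -/
def IsInvChar (G : Type*) {Γ : Type*} [Group G] [Group Γ] [MulDistribMulAction G Γ]
    (φ : Γ → ℂ) : Prop :=
  IsInvTrace G φ ∧ ∀ (ψ₁ ψ₂ : Γ → ℂ) (t : ℝ), IsInvTrace G ψ₁ → IsInvTrace G ψ₂ →
    0 < t → t < 1 → φ = (fun γ => (t : ℂ) * ψ₁ γ + ((1 - t : ℝ) : ℂ) * ψ₂ γ) →
    ψ₁ = φ ∧ ψ₂ = φ

/-!
Realise `φ` as `⟨π(·) ξ, ξ⟩`. For a central `G`-fixed `z`, the vectors `(1 ± d π(z)) ξ` give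
`G`-invariant functions of positive type adding up to `2 (1 + |d|²) φ`; for small `d` neither
vanishes at `1`, so by extremality each is a multiple of `φ`. Comparing `d = s` with `d = i s`
gives `φ(zγ) = φ(z) φ(γ)`, and `γ = z⁻¹` together with `φ(z⁻¹) = conj φ(z)` gives `|φ(z)|² = 1`.
-/

open ComplexConjugate

section

variable {Γ : Type*} [Group Γ]

namespace IsPosType

variable {φ : Γ → ℂ}

theorem sum_nonneg (hφ : IsPosType φ) {ι : Type*} [Fintype ι] (γ : ι → Γ) (c : ι → ℂ) :
    0 ≤ ∑ i, ∑ j, c i * conj (c j) * φ ((γ j)⁻¹ * γ i) := by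
  let e := Fintype.equivFin ι
  have h := hφ _ (γ ∘ e.symm) (c ∘ e.symm)
  refine h.trans_eq ?_
  rw [← e.symm.sum_comp]
  refine Finset.sum_congr rfl fun i _ => ?_
  rw [← e.symm.sum_comp]
  rfl

theorem map_one_nonneg (hφ : IsPosType φ) : 0 ≤ φ 1 := by
  simpa using hφ 1 ![1] ![1]

theorem two_point_nonneg (hφ : IsPosType φ) (γ : Γ) (c₁ c₂ : ℂ) :
    0 ≤ (c₁ * conj c₁ + c₂ * conj c₂) * φ 1 + c₂ * conj c₁ * φ γ + c₁ * conj c₂ * φ γ⁻¹ := by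
  have h := hφ 2 ![1, γ] ![c₁, c₂]
  simp only [Fin.sum_univ_two, Matrix.cons_val_zero, Matrix.cons_val_one, inv_one, one_mul,
    mul_one, inv_mul_cancel] at h
  convert h using 1
  ring

theorem map_inv (hφ : IsPosType φ) (γ : Γ) : φ γ⁻¹ = conj (φ γ) := by
  have h₀ := (Complex.nonneg_iff.mp hφ.map_one_nonneg).2
  have h₁ := (Complex.nonneg_iff.mp (hφ.two_point_nonneg γ 1 1)).2
  have h₂ := (Complex.nonneg_iff.mp (hφ.two_point_nonneg γ 1 Complex.I)).2
  simp only [map_one, mul_one, one_mul, Complex.add_im, Complex.mul_im, Complex.add_re,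
    Complex.one_re, Complex.one_im, add_zero, zero_mul, Complex.conj_I, mul_neg, Complex.I_mul_I,
    neg_neg, neg_mul, Complex.I_re, Complex.I_im, zero_add, Complex.neg_im] at h₁ h₂
  apply Complex.ext
  · rw [Complex.conj_re]; linarith
  · rw [Complex.conj_im]; linarith

theorem const_mul {ψ : Γ → ℂ} (hψ : IsPosType ψ) {r : ℝ} (hr : 0 ≤ r) :
    IsPosType (fun γ => (r : ℂ) * ψ γ) := by
  intro n γ c
  refine (mul_nonneg (Complex.zero_le_real.mpr hr) (hψ n γ c)).trans_eq ?_
  simp only [Finset.mul_sum]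
  exact Finset.sum_congr rfl fun i _ => Finset.sum_congr rfl fun j _ => by ring

end IsPosType

/-- The positive-type function `γ ↦ ⟨π(γ) v, v⟩` for `v = (1 + d π(z)) ξ`, when `φ = ⟨π(·) ξ, ξ⟩`
and `z` is central. -/
def centralTwist (φ : Γ → ℂ) (z : Γ) (d : ℂ) (γ : Γ) : ℂ :=
  (1 + d * conj d) * φ γ + d * φ (z * γ) + conj d * φ (z⁻¹ * γ)

section centralTwist

variable {φ : Γ → ℂ} {z : Γ}

theorem centralTwist_add_centralTwist_neg (d : ℂ) (γ : Γ) :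
    centralTwist φ z d γ + centralTwist φ z (-d) γ = 2 * (1 + d * conj d) * φ γ := by
  simp only [centralTwist, map_neg]
  ring

theorem centralTwist_one (hφ : IsPosType φ) (h1 : φ 1 = 1) (d : ℂ) :
    centralTwist φ z d 1 = ((1 + Complex.normSq d + 2 * (d * φ z).re : ℝ) : ℂ) := by
  have h := Complex.add_conj (d * φ z)
  rw [map_mul, Complex.ofReal_mul, Complex.ofReal_ofNat] at h
  simp only [centralTwist, mul_one, h1, hφ.map_inv, Complex.mul_conj]
  push_cast
  linear_combination h

theorem IsPosType.centralTwist (hφ : IsPosType φ) (hz : ∀ γ, z * γ = γ * z) (d : ℂ) :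
    IsPosType (centralTwist φ z d) := by
  intro n γ c
  have hz' : ∀ γ, z⁻¹ * γ = γ * z⁻¹ := fun γ => Commute.inv_left (hz γ)
  have h := hφ.sum_nonneg (Sum.elim γ (fun i => z * γ i)) (Sum.elim c (fun i => d * c i))
  have e₁ : ∀ i j : Fin n, (z * γ j)⁻¹ * γ i = z⁻¹ * ((γ j)⁻¹ * γ i) := fun i j => by
    rw [mul_inv_rev, ← hz', mul_assoc]
  have e₂ : ∀ i j : Fin n, (γ j)⁻¹ * (z * γ i) = z * ((γ j)⁻¹ * γ i) := fun i j => by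
    rw [← mul_assoc, ← hz, mul_assoc]
  have e₃ : ∀ i j : Fin n, (z * γ j)⁻¹ * (z * γ i) = (γ j)⁻¹ * γ i := fun i j => by
    group
  simp only [Fintype.sum_sum_type, Sum.elim_inl, Sum.elim_inr, e₁, e₂, e₃, map_mul,
    ← Finset.sum_add_distrib] at h
  refine h.trans_eq (Finset.sum_congr rfl fun i _ => Finset.sum_congr rfl fun j _ => ?_)
  simp only [_root_.centralTwist]
  ring

theorem centralTwist_smul {G : Type*} [Group G] [MulDistribMulAction G Γ]
    (hφ : ∀ (g : G) γ, φ (g • γ) = φ γ) (hzG : ∀ g : G, g • z = z) (d : ℂ) (g : G) (γ : Γ) :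
    centralTwist φ z d (g • γ) = centralTwist φ z d γ := by
  have h₁ : z * g • γ = g • (z * γ) := by rw [smul_mul', hzG]
  have h₂ : z⁻¹ * g • γ = g • (z⁻¹ * γ) := by rw [smul_mul', smul_inv', hzG]
  simp only [centralTwist, h₁, h₂, hφ]

end centralTwist

section Character

variable {G : Type*} [Group G] [MulDistribMulAction G Γ] {φ : Γ → ℂ}

theorem isInvTrace_inv_mul {ψ : Γ → ℂ} (hψ : IsPosType ψ) (hG : ∀ (g : G) γ, ψ (g • γ) = ψ γ)
    {r : ℝ} (hr : 0 < r) (h1 : ψ 1 = r) :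
    IsInvTrace G (fun γ => ((r⁻¹ : ℝ) : ℂ) * ψ γ) := by
  refine ⟨hψ.const_mul (inv_nonneg.mpr hr.le), fun g γ => by simp only [hG], ?_⟩
  beta_reduce
  rw [h1, ← Complex.ofReal_mul, inv_mul_cancel₀ hr.ne', Complex.ofReal_one]

theorem IsInvChar.eq_mul_of_add_eq (hφ : IsInvChar G φ) {ψ₁ ψ₂ : Γ → ℂ}
    (hψ₁ : IsPosType ψ₁) (hψ₂ : IsPosType ψ₂)
    (hG₁ : ∀ (g : G) γ, ψ₁ (g • γ) = ψ₁ γ) (hG₂ : ∀ (g : G) γ, ψ₂ (g • γ) = ψ₂ γ)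
    {r₁ r₂ : ℝ} (hr₁ : 0 < r₁) (hr₂ : 0 < r₂) (h₁ : ψ₁ 1 = r₁) (h₂ : ψ₂ 1 = r₂)
    (hsum : ∀ γ, ψ₁ γ + ψ₂ γ = (r₁ + r₂ : ℝ) * φ γ) (γ : Γ) :
    ψ₁ γ = r₁ * φ γ := by
  have hr : 0 < r₁ + r₂ := add_pos hr₁ hr₂
  have hdecomp : φ = fun γ => ((r₁ / (r₁ + r₂) : ℝ) : ℂ) * (((r₁⁻¹ : ℝ) : ℂ) * ψ₁ γ)
      + ((1 - r₁ / (r₁ + r₂) : ℝ) : ℂ) * (((r₂⁻¹ : ℝ) : ℂ) * ψ₂ γ) := by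
    funext γ
    have hr₁' : (r₁ : ℂ) ≠ 0 := by exact_mod_cast hr₁.ne'
    have hr₂' : (r₂ : ℂ) ≠ 0 := by exact_mod_cast hr₂.ne'
    have hr' : (r₁ : ℂ) + r₂ ≠ 0 := by exact_mod_cast hr.ne'
    have ht : 1 - r₁ / (r₁ + r₂) = r₂ / (r₁ + r₂) := by field_simp; ring
    rw [ht]
    push_cast at hsum ⊢
    field_simp
    linear_combination -hsum γ
  have h := congrFun (hφ.2 _ _ _ (isInvTrace_inv_mul hψ₁ hG₁ hr₁ h₁)
    (isInvTrace_inv_mul hψ₂ hG₂ hr₂ h₂) (div_pos hr₁ hr)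
    ((div_lt_one hr).mpr (by linarith)) hdecomp).1 γ
  rw [← h, ← mul_assoc, ← Complex.ofReal_mul, mul_inv_cancel₀ hr₁.ne', Complex.ofReal_one, one_mul]

theorem IsInvChar.centralTwist_eq_mul (hφ : IsInvChar G φ) {z : Γ} (hz : ∀ γ, z * γ = γ * z)
    (hzG : ∀ g : G, g • z = z) {d : ℂ} (hd : 2 * ‖d‖ * ‖φ z‖ < 1) (γ : Γ) :
    centralTwist φ z d γ = centralTwist φ z d 1 * φ γ := by
  obtain ⟨hpt, hinv, h1⟩ := hφ.1
  have hpos : ∀ e : ℂ, ‖e‖ = ‖d‖ → 0 < 1 + Complex.normSq e + 2 * (e * φ z).re := by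
    intro e he
    have h : |(e * φ z).re| ≤ ‖d‖ * ‖φ z‖ :=
      (Complex.abs_re_le_norm _).trans_eq (by rw [norm_mul, he])
    nlinarith [neg_abs_le (e * φ z).re, Complex.normSq_nonneg e]
  have hsum : ∀ γ, centralTwist φ z d γ + centralTwist φ z (-d) γ =
      ((1 + Complex.normSq d + 2 * (d * φ z).re + (1 + Complex.normSq (-d) + 2 * (-d * φ z).re)
        : ℝ) : ℂ) * φ γ := by
    intro γ
    rw [centralTwist_add_centralTwist_neg, Complex.normSq_neg, neg_mul, Complex.neg_re,
      Complex.mul_conj]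
    push_cast
    ring
  rw [centralTwist_one hpt h1 d]
  exact hφ.eq_mul_of_add_eq (hpt.centralTwist hz d) (hpt.centralTwist hz (-d))
    (centralTwist_smul hinv hzG d) (centralTwist_smul hinv hzG (-d)) (hpos d rfl)
    (hpos (-d) (norm_neg d)) (centralTwist_one hpt h1 d) (centralTwist_one hpt h1 (-d)) hsum γ

theorem IsInvChar.map_central_mul (hφ : IsInvChar G φ) {z : Γ} (hz : ∀ γ, z * γ = γ * z)
    (hzG : ∀ g : G, g • z = z) (γ : Γ) : φ (z * γ) = φ z * φ γ := by
  obtain ⟨s, hs, hsmall⟩ : ∃ s : ℝ, 0 < s ∧ 2 * s * ‖φ z‖ < 1 := by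
    refine ⟨(2 * (‖φ z‖ + 1))⁻¹, by positivity, ?_⟩
    rw [show 2 * (2 * (‖φ z‖ + 1))⁻¹ * ‖φ z‖ = ‖φ z‖ / (‖φ z‖ + 1) by field_simp,
      div_lt_one (by positivity)]
    linarith
  have h₁ := hφ.centralTwist_eq_mul hz hzG (d := s) (by simpa [abs_of_pos hs] using hsmall) γ
  have h₂ := hφ.centralTwist_eq_mul hz hzG (d := s * Complex.I)
    (by simpa [abs_of_pos hs] using hsmall) γ
  simp only [centralTwist, mul_one, hφ.1.2.2, hφ.1.1.map_inv, map_mul, Complex.conj_ofReal,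
    Complex.conj_I] at h₁ h₂
  have h : (2 * s : ℂ) * (φ (z * γ) - φ z * φ γ) = 0 := by
    linear_combination h₁ - Complex.I * h₂ + (s * φ (z * γ) - s * φ z * φ γ
      + s * φ γ * conj (φ z) - s * φ (z⁻¹ * γ)) * Complex.I_sq
  simpa [sub_eq_zero, hs.ne'] using h

end Character

end

theorem stmt6 {G Γ : Type*} [Group G] [Group Γ] [MulDistribMulAction G Γ]
    (φ : Γ → ℂ) (hφ : IsInvChar G φ)
    (z : Γ) (hz : ∀ γ : Γ, z * γ = γ * z) (hzG : ∀ g : G, g • z = z) :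
    ‖φ z‖ = 1 := by
  have h := hφ.map_central_mul hz hzG z⁻¹
  rw [mul_inv_cancel, hφ.1.2.2, hφ.1.1.map_inv, Complex.mul_conj, eq_comm] at h
  rw [Complex.norm_def, Complex.ofReal_eq_one.mp h, Real.sqrt_one]
end

section
/- Let 𝔸 be the adele ring of ℚ, d ≥ 1, X = 𝔸^d/ℚ^d, and φ : 𝔸^d → X the canonical projection. Let V be a ℚ-linear subspace of ℚ^d. Write an adele vector a ∈ 𝔸^d as a = (a_∞, (a_p)_p) with a_∞ ∈ ℝ^d and a_p ∈ ℚ_p^d. Let V(ℝ) be the ℝ-span of V in ℝ^d, for each prime p let V(ℤ_p) be the ℤ_p-span in ℚ_p^d of V ∩ ℤ^d, and let V(𝔸) be the 𝔸-submodule of 𝔸^d generated by V. Then the intersection, over all finite sets S of primes, of the sets φ({a ∈ 𝔸^d : a_∞ ∈ V(ℝ), a_p ∈ V(ℤ_p) for p ∈ S, and a_p ∈ ℤ_p^d for p ∉ S}) is equal to φ(V(𝔸)). -/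
/-!
Every class in `φ (V(𝔸))` has a representative in `V(ℝ) × ∏_p V(ℤ_p)`: write the representative
as `∑ c_j • m_j` with `m_j ∈ V ∩ ℤ^d`; by strong approximation each `c_j` differs from a rational
number by an adele that is integral at every prime, and moving these rationals into `ℚ^d`
leaves a representative all of whose `p`-components lie in `V(ℤ_p)`. Such a representative lies
in every box. Conversely, take a representative `a` of a class in the intersection lying in the
box for `S = ∅`. For each prime `p` it differs from a representative in the box for `S = {p}` by
some `q ∈ ℚ^d`; the real components force `q ∈ V` and the `p`-components force `q` to be
`p`-integral, so `a_p ∈ V(ℤ_p)` for every `p`. Finally `V(ℝ) × ∏_p V(ℤ_p) ⊆ V(𝔸)`, because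
`V ∩ ℤ^d` is finitely generated, so local coefficients along a fixed finite set of generators
glue to adelic ones.
-/

open NumberField IsDedekindDomain

/-- The diagonal embedding of `ℚ^d` into `𝔸^d`, where `𝔸` is the adele ring of `ℚ`. -/
noncomputable def diagEmb (d : ℕ) : (Fin d → ℚ) →+ (Fin d → AdeleRing (𝓞 ℚ) ℚ) where
  toFun := fun q i => algebraMap ℚ (AdeleRing (𝓞 ℚ) ℚ) (q i)
  map_zero' := by funext i; simp
  map_add' := by intro a b; funext i; simp

/-- `ℚ^d`, viewed as a subgroup of `𝔸^d` via the diagonal embedding. -/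
noncomputable def ratPoints (d : ℕ) : AddSubgroup (Fin d → AdeleRing (𝓞 ℚ) ℚ) :=
  (diagEmb d).range

/-- The adelic solenoid `X = 𝔸^d / ℚ^d`. -/
abbrev AdelicSolenoid (d : ℕ) := (Fin d → AdeleRing (𝓞 ℚ) ℚ) ⧸ ratPoints d

/-- `V (𝔸)`: the `𝔸`-submodule of `𝔸^d` generated by the (diagonal image of the)
`ℚ`-subspace `V` of `ℚ^d`. -/
noncomputable def adeleSpan (d : ℕ) (V : Submodule ℚ (Fin d → ℚ)) :
    Submodule (AdeleRing (𝓞 ℚ) ℚ) (Fin d → AdeleRing (𝓞 ℚ) ℚ) :=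
  Submodule.span (AdeleRing (𝓞 ℚ) ℚ) (diagEmb d '' (V : Set (Fin d → ℚ)))

/-- `φ (V (𝔸)) ⊆ X`, the image of `V (𝔸)` under the canonical projection
`φ : 𝔸^d → X = 𝔸^d / ℚ^d`. -/
noncomputable def solSub (d : ℕ) (V : Submodule ℚ (Fin d → ℚ)) :
    Set (AdelicSolenoid d) :=
  (QuotientAddGroup.mk : (Fin d → AdeleRing (𝓞 ℚ) ℚ) → AdelicSolenoid d) ''
    (adeleSpan d V : Set (Fin d → AdeleRing (𝓞 ℚ) ℚ))

/-- The component `a_∞ ∈ ℝ^d` (i.e. in the infinite adele component) of `a ∈ 𝔸^d`. -/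
def infPart (d : ℕ) (a : Fin d → AdeleRing (𝓞 ℚ) ℚ) : Fin d → InfiniteAdeleRing ℚ :=
  fun i => (show InfiniteAdeleRing ℚ × FiniteAdeleRing (𝓞 ℚ) ℚ from a i).1

/-- The component `a_p ∈ ℚ_p^d` of `a ∈ 𝔸^d` at the finite place (prime) `p = v`. -/
def finPart (d : ℕ) (v : HeightOneSpectrum (𝓞 ℚ)) (a : Fin d → AdeleRing (𝓞 ℚ) ℚ) :
    Fin d → v.adicCompletion ℚ :=
  fun i => ((show InfiniteAdeleRing ℚ × FiniteAdeleRing (𝓞 ℚ) ℚ from a i).2) v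

/-- `V (ℝ)`: the `ℝ`-span of `V` in `ℝ^d` (the infinite adele component of `𝔸^d`;
for `ℚ` there is a single infinite place, with completion `ℝ`). -/
noncomputable def infSpan (d : ℕ) (V : Submodule ℚ (Fin d → ℚ)) :
    Submodule (InfiniteAdeleRing ℚ) (Fin d → InfiniteAdeleRing ℚ) :=
  Submodule.span (InfiniteAdeleRing ℚ)
    ((fun q : Fin d → ℚ => fun i => algebraMap ℚ (InfiniteAdeleRing ℚ) (q i)) ''
      (V : Set (Fin d → ℚ)))

/-- `V (ℤ_p)`: the `ℤ_p`-span in `ℚ_p^d` of `V ∩ ℤ^d`, at the finite place `p = v`. -/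
noncomputable def intSpan (d : ℕ) (V : Submodule ℚ (Fin d → ℚ))
    (v : HeightOneSpectrum (𝓞 ℚ)) :
    Submodule (v.adicCompletionIntegers ℚ) (Fin d → v.adicCompletion ℚ) :=
  Submodule.span (v.adicCompletionIntegers ℚ)
    ((fun q : Fin d → ℚ => fun i => algebraMap ℚ (v.adicCompletion ℚ) (q i)) ''
      {q : Fin d → ℚ | q ∈ V ∧ ∀ i, ∃ m : ℤ, q i = (m : ℚ)})

/-- The set `{a ∈ 𝔸^d : a_∞ ∈ V (ℝ), a_p ∈ V (ℤ_p) for p ∈ S, a_p ∈ ℤ_p^d for p ∉ S}`,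
for a finite set `S` of primes (= finite places of `ℚ`). -/
def boxSet (d : ℕ) (V : Submodule ℚ (Fin d → ℚ))
    (S : Finset (HeightOneSpectrum (𝓞 ℚ))) : Set (Fin d → AdeleRing (𝓞 ℚ) ℚ) :=
  {a | infPart d a ∈ infSpan d V ∧
    (∀ v ∈ S, finPart d v a ∈ intSpan d V v) ∧
    (∀ v ∉ S, ∀ i : Fin d, finPart d v a i ∈ v.adicCompletionIntegers ℚ)}

namespace IsDedekindDomain

variable {R : Type*} [CommRing R] [IsDedekindDomain R] {K : Type*} [Field K]
  [Algebra R K] [IsFractionRing R K]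

namespace HeightOneSpectrum

theorem algebraMap_mem_adicCompletionIntegers_iff (v : HeightOneSpectrum R) (k : K) :
    algebraMap K (v.adicCompletion K) k ∈ v.adicCompletionIntegers K ↔ v.valuation K k ≤ 1 := by
  rw [mem_adicCompletionIntegers, ← valuedAdicCompletion_eq_valuation']
  rfl

theorem exists_sub_mem_adicCompletionIntegers (v : HeightOneSpectrum R) (x : v.adicCompletion K) :
    ∃ r : K, x - algebraMap K (v.adicCompletion K) r ∈ v.adicCompletionIntegers K := by
  have hopen : IsOpen {y : v.adicCompletion K | x - y ∈ v.adicCompletionIntegers K} :=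
    (Valued.isOpen_valuationSubring _).preimage (continuous_const.sub continuous_id)
  obtain ⟨r, hr⟩ := (denseRange_algebraMap (K := K) v).exists_mem_open hopen
    ⟨x, by simp [zero_mem]⟩
  exact ⟨r, hr⟩

theorem exists_forall_intValuation_sub_le {b : R} (hb : b ≠ 0) (t : HeightOneSpectrum R → R) :
    ∃ y : R, ∀ v : HeightOneSpectrum R, v.intValuation (t v - y) ≤ v.intValuation b := by
  have hspan : Ideal.span {b} ≠ 0 := by
    rwa [Ne, Ideal.zero_eq_bot, Ideal.span_singleton_eq_bot]
  -- Chinese remainders modulo `v ^ v(b)` for the finitely many `v ∣ b`; at the other primes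
  -- the required congruence is modulo `v ^ 0 = ⊤`.
  set F := (Ideal.finite_factors hspan).toFinset
  obtain ⟨y, hy⟩ := exists_forall_sub_mem_ideal (s := F) (fun v => v.asIdeal)
    (fun v => multiplicity v.asIdeal (Ideal.span {b})) (fun v _ => v.prime)
    (fun v _ w _ hvw h => hvw (HeightOneSpectrum.ext h)) (fun v => t v)
  refine ⟨y, fun v => ?_⟩
  rw [intValuation_eq_exp_neg_multiplicity v hb, intValuation_le_pow_iff_mem]
  by_cases hv : v ∈ F
  · simpa using neg_mem (hy v hv)
  · have hmult : multiplicity v.asIdeal (Ideal.span {b}) = 0 :=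
      multiplicity_eq_zero.2 fun h => hv ((Ideal.finite_factors hspan).mem_toFinset.2 h)
    simp [hmult]

theorem exists_forall_valuation_sub_le_one {r : HeightOneSpectrum R → K}
    (hr : ∀ᶠ v : HeightOneSpectrum R in Filter.cofinite, v.valuation K (r v) ≤ 1) :
    ∃ q : K, ∀ v : HeightOneSpectrum R, v.valuation K (r v - q) ≤ 1 := by
  classical
  -- `q = y / b`, where `b` clears the denominators of the finitely many non-integral `r v`.
  set T := (Filter.eventually_cofinite.1 hr).toFinset
  obtain ⟨b, hb⟩ := IsLocalization.exist_integer_multiples (nonZeroDivisors R) T r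
  choose! t ht using hb
  have hb0 : (b : R) ≠ 0 := nonZeroDivisors.ne_zero b.2
  have hbK : algebraMap R K b ≠ 0 := (map_ne_zero_iff _ (IsFractionRing.injective R K)).2 hb0
  obtain ⟨y, hy⟩ := exists_forall_intValuation_sub_le hb0 (T.piecewise t 0)
  refine ⟨algebraMap R K y / algebraMap R K b, fun v => ?_⟩
  have hnum : v.valuation K (r v - algebraMap R K (T.piecewise t 0 v) / algebraMap R K b) ≤ 1 := by
    by_cases hv : v ∈ T
    · rw [T.piecewise_eq_of_mem _ _ hv, ht v hv, Algebra.smul_def, mul_div_cancel_left₀ _ hbK,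
        sub_self, map_zero]
      exact zero_le
    · rw [T.piecewise_eq_of_notMem _ _ hv]
      simpa [T] using hv
  have hrem : v.valuation K (algebraMap R K (T.piecewise t 0 v - y) / algebraMap R K b) ≤ 1 := by
    rw [map_div₀, valuation_of_algebraMap, valuation_of_algebraMap,
      div_le_one₀ (zero_lt_iff.2 (v.intValuation_ne_zero _ hb0))]
    exact hy v
  calc v.valuation K (r v - algebraMap R K y / algebraMap R K b)
      = v.valuation K ((r v - algebraMap R K (T.piecewise t 0 v) / algebraMap R K b) +
          algebraMap R K (T.piecewise t 0 v - y) / algebraMap R K b) := by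
        congr 1
        rw [map_sub (algebraMap R K)]
        ring
    _ ≤ 1 := (Valuation.map_add _ _ _).trans (max_le hnum hrem)

end HeightOneSpectrum

theorem FiniteAdeleRing.exists_forall_sub_mem_adicCompletionIntegers (f : FiniteAdeleRing R K) :
    ∃ q : K, ∀ v : HeightOneSpectrum R,
      f v - algebraMap K (v.adicCompletion K) q ∈ v.adicCompletionIntegers K := by
  choose r hr using fun v : HeightOneSpectrum R => v.exists_sub_mem_adicCompletionIntegers (f v)
  have hr_int : ∀ᶠ v : HeightOneSpectrum R in Filter.cofinite, v.valuation K (r v) ≤ 1 := by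
    filter_upwards [f.2] with v hv
    rw [← HeightOneSpectrum.algebraMap_mem_adicCompletionIntegers_iff]
    convert sub_mem hv (hr v) using 1
    exact (sub_sub_cancel _ _).symm
  obtain ⟨q, hq⟩ := HeightOneSpectrum.exists_forall_valuation_sub_le_one hr_int
  refine ⟨q, fun v => ?_⟩
  have hrq : algebraMap K (v.adicCompletion K) (r v - q) ∈ v.adicCompletionIntegers K :=
    (HeightOneSpectrum.algebraMap_mem_adicCompletionIntegers_iff v _).2 (hq v)
  simpa using add_mem (hr v) hrq

end IsDedekindDomain

open IsDedekindDomain.HeightOneSpectrum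

theorem Submodule.span_image_span_int {B M N : Type*} [Ring B] [AddCommGroup M] [AddCommGroup N]
    [Module B N] (g : M →+ N) (s : Set M) :
    Submodule.span B (g '' Submodule.span ℤ s) = Submodule.span B (g '' s) := by
  rw [← Submodule.span_span_of_tower ℤ B (g '' s)]
  congr 1
  exact congrArg SetLike.coe (Submodule.map_span g.toIntLinearMap s)

def ratDiag (A : Type*) [CommRing A] [Algebra ℚ A] (d : ℕ) : (Fin d → ℚ) →ₗ[ℚ] (Fin d → A) :=
  (Algebra.linearMap ℚ A).compLeft (Fin d)

def latticePoints {d : ℕ} (V : Submodule ℚ (Fin d → ℚ)) : Submodule ℤ (Fin d → ℚ) where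
  carrier := {q | q ∈ V ∧ ∀ i, ∃ m : ℤ, q i = m}
  add_mem' := by
    rintro a b ⟨haV, ha⟩ ⟨hbV, hb⟩
    refine ⟨V.add_mem haV hbV, fun i => ?_⟩
    obtain ⟨m, hm⟩ := ha i
    obtain ⟨n, hn⟩ := hb i
    exact ⟨m + n, by simp [hm, hn]⟩
  zero_mem' := ⟨V.zero_mem, fun _ => ⟨0, by simp⟩⟩
  smul_mem' := by
    rintro z a ⟨haV, ha⟩
    refine ⟨V.smul_of_tower_mem z haV, fun i => ?_⟩
    obtain ⟨m, hm⟩ := ha i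
    exact ⟨z * m, by simp [hm]⟩

variable {d : ℕ} (V : Submodule ℚ (Fin d → ℚ))

theorem latticePoints_fg : (latticePoints V).FG := by
  set g := (Algebra.linearMap ℤ ℚ).compLeft (Fin d)
  have hle : latticePoints V ≤ LinearMap.range g := fun q hq => by
    choose m hm using hq.2
    exact ⟨m, funext fun i => (hm i).symm⟩
  rw [← Submodule.map_comap_eq_self hle]
  exact (IsNoetherian.noetherian _).map g

def commonDen (q : Fin d → ℚ) : ℕ := ∏ i, (q i).den

theorem commonDen_ne_zero (q : Fin d → ℚ) : (commonDen q : ℚ) ≠ 0 := by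
  simp [commonDen, Finset.prod_ne_zero_iff]

theorem commonDen_smul_mem_latticePoints {q : Fin d → ℚ} (hq : q ∈ V) :
    (commonDen q : ℚ) • q ∈ latticePoints V := by
  refine ⟨V.smul_mem _ hq, fun i => ?_⟩
  obtain ⟨k, hk⟩ := Finset.dvd_prod_of_mem (fun j => (q j).den) (Finset.mem_univ i)
  refine ⟨k * (q i).num, ?_⟩
  rw [Pi.smul_apply, smul_eq_mul, commonDen, hk]
  push_cast
  rw [mul_comm ((q i).den : ℚ), mul_assoc, Rat.den_mul_eq_num]

theorem valuation_den_eq_one (v : HeightOneSpectrum (𝓞 ℚ)) {x : ℚ}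
    (hx : v.valuation ℚ x ≤ 1) : v.valuation ℚ x.den = 1 := by
  obtain ⟨a, b, hab⟩ := Rat.isCoprime_num_den x
  have hden : ((x.den : ℤ) : 𝓞 ℚ) ≠ 0 := by simp
  have hcop : ((x.den : ℤ) : 𝓞 ℚ) ∈ v.asIdeal → ((x.num : ℤ) : 𝓞 ℚ) ∉ v.asIdeal := by
    intro hd hn
    apply v.isPrime.ne_top
    rw [Ideal.eq_top_iff_one, ← Int.cast_one, ← hab]
    push_cast
    exact add_mem (Ideal.mul_mem_left _ _ hn) (Ideal.mul_mem_left _ _ hd)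
  have := (valuation_div_le_one_iff ℚ v _ hden hcop).1 (by simpa [Rat.num_div_den] using hx)
  simpa using (valuation_eq_one_iff_notMem (K := ℚ) v).2 this

theorem valuation_commonDen (v : HeightOneSpectrum (𝓞 ℚ)) {q : Fin d → ℚ}
    (hq : ∀ i, v.valuation ℚ (q i) ≤ 1) : v.valuation ℚ (commonDen q) = 1 := by
  simp only [commonDen, Nat.cast_prod, map_prod]
  exact Finset.prod_eq_one fun i _ => valuation_den_eq_one v (hq i)

theorem span_ratDiag_latticePoints (A : Type*) [CommRing A] [Algebra ℚ A] :
    Submodule.span A (ratDiag A d '' latticePoints V) = Submodule.span A (ratDiag A d '' V) := by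
  refine le_antisymm (Submodule.span_mono (Set.image_mono fun q hq => hq.1)) ?_
  rw [Submodule.span_le]
  rintro _ ⟨q, hq, rfl⟩
  rw [← inv_smul_smul₀ (commonDen_ne_zero q) q, map_smul]
  exact Submodule.smul_of_tower_mem _ _
    (Submodule.subset_span ⟨_, commonDen_smul_mem_latticePoints V hq, rfl⟩)

theorem mem_of_ratDiag_mem_span {A : Type*} [CommRing A] [Algebra ℚ A] [Nontrivial A]
    {q : Fin d → ℚ} (h : ratDiag A d q ∈ Submodule.span A (ratDiag A d '' V)) : q ∈ V := by
  by_contra hq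
  obtain ⟨f, hfq, hfV⟩ := Submodule.exists_dual_map_eq_bot_of_notMem hq inferInstance
  let L : (Fin d → A) →ₗ[A] A :=
    ∑ i, algebraMap ℚ A (f (fun j => if i = j then 1 else 0)) • LinearMap.proj i
  have hL : ∀ p, L (ratDiag A d p) = algebraMap ℚ A (f p) := fun p => by
    rw [LinearMap.pi_apply_eq_sum_univ f p, map_sum]
    simp [L, ratDiag, LinearMap.sum_apply, Algebra.smul_def, mul_comm]
  have hker : Submodule.span A (ratDiag A d '' V) ≤ LinearMap.ker L := by
    rw [Submodule.span_le]
    rintro _ ⟨p, hp, rfl⟩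
    simp [hL, (Submodule.eq_bot_iff _).1 hfV (f p) ⟨p, hp, rfl⟩]
  exact hfq ((algebraMap ℚ A).injective (by rw [← hL, map_zero]; exact hker h))

theorem apply_mem_of_mem_intSpan (v : HeightOneSpectrum (𝓞 ℚ)) {x : Fin d → v.adicCompletion ℚ}
    (hx : x ∈ intSpan d V v) (i : Fin d) : x i ∈ v.adicCompletionIntegers ℚ := by
  induction hx using Submodule.span_induction with
  | mem _ h =>
    obtain ⟨q, ⟨-, hq⟩, rfl⟩ := h
    obtain ⟨m, hm⟩ := hq i
    simp [hm]
  | zero => exact zero_mem _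
  | add _ _ _ _ hx hy => exact add_mem hx hy
  | smul c _ _ hx => exact mul_mem c.2 hx

theorem ratDiag_mem_intSpan (v : HeightOneSpectrum (𝓞 ℚ)) {q : Fin d → ℚ} (hq : q ∈ V)
    (hint : ∀ i, v.valuation ℚ (q i) ≤ 1) : ratDiag (v.adicCompletion ℚ) d q ∈ intSpan d V v := by
  have hunit :
      algebraMap ℚ (v.adicCompletion ℚ) (commonDen q : ℚ)⁻¹ ∈ v.adicCompletionIntegers ℚ := by
    rw [algebraMap_mem_adicCompletionIntegers_iff, map_inv₀, valuation_commonDen v hint, inv_one]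
  have h : (⟨_, hunit⟩ : v.adicCompletionIntegers ℚ) •
      ratDiag (v.adicCompletion ℚ) d ((commonDen q : ℚ) • q) =
        ratDiag (v.adicCompletion ℚ) d q := by
    change algebraMap ℚ (v.adicCompletion ℚ) (commonDen q : ℚ)⁻¹ •
      ratDiag (v.adicCompletion ℚ) d ((commonDen q : ℚ) • q) = _
    rw [algebraMap_smul, map_smul, inv_smul_smul₀ (commonDen_ne_zero q)]
  rw [← h]
  exact Submodule.smul_mem _ _
    (Submodule.subset_span ⟨_, commonDen_smul_mem_latticePoints V hq, rfl⟩)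

theorem span_ratDiag_eq_span_finset (A : Type*) [CommRing A] [Algebra ℚ A]
    {s : Finset (Fin d → ℚ)} (hs : Submodule.span ℤ s = latticePoints V) :
    Submodule.span A (ratDiag A d '' V) = Submodule.span A (ratDiag A d '' s) := by
  rw [← span_ratDiag_latticePoints, ← hs]
  exact Submodule.span_image_span_int (ratDiag A d).toAddMonoidHom _

theorem intSpan_eq_span_finset (v : HeightOneSpectrum (𝓞 ℚ))
    {s : Finset (Fin d → ℚ)} (hs : Submodule.span ℤ s = latticePoints V) :
    intSpan d V v = Submodule.span _ (ratDiag (v.adicCompletion ℚ) d '' s) := by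
  change Submodule.span _ (ratDiag _ d '' latticePoints V) = _
  rw [← hs]
  exact Submodule.span_image_span_int (B := v.adicCompletionIntegers ℚ)
    (ratDiag (v.adicCompletion ℚ) d).toAddMonoidHom _

theorem ext_infPart_finPart {a b : Fin d → AdeleRing (𝓞 ℚ) ℚ}
    (h : infPart d a = infPart d b) (h' : ∀ v, finPart d v a = finPart d v b) : a = b :=
  funext fun i => Prod.ext (congrFun h i) (FiniteAdeleRing.ext ℚ fun v => congrFun (h' v) i)

theorem infPart_sum_smul_diagEmb {ι : Type*} (s : Finset ι) (c : ι → AdeleRing (𝓞 ℚ) ℚ)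
    (m : ι → Fin d → ℚ) :
    infPart d (∑ i ∈ s, c i • diagEmb d (m i)) = ∑ i ∈ s, (c i).1 • ratDiag _ d (m i) :=
  map_sum (⟨⟨infPart d, rfl⟩, fun _ _ => rfl⟩ : (Fin d → AdeleRing (𝓞 ℚ) ℚ) →+ _) _ s

theorem finPart_sum_smul_diagEmb (v : HeightOneSpectrum (𝓞 ℚ)) {ι : Type*} (s : Finset ι)
    (c : ι → AdeleRing (𝓞 ℚ) ℚ) (m : ι → Fin d → ℚ) :
    finPart d v (∑ i ∈ s, c i • diagEmb d (m i)) = ∑ i ∈ s, (c i).2 v • ratDiag _ d (m i) :=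
  map_sum (⟨⟨finPart d v, rfl⟩, fun _ _ => rfl⟩ : (Fin d → AdeleRing (𝓞 ℚ) ℚ) →+ _) _ s

/-- `V(ℝ) × ∏_p V(ℤ_p)`. -/
def adelicIntSpan (d : ℕ) (V : Submodule ℚ (Fin d → ℚ)) :
    AddSubgroup (Fin d → AdeleRing (𝓞 ℚ) ℚ) where
  carrier := {a | infPart d a ∈ infSpan d V ∧ ∀ v, finPart d v a ∈ intSpan d V v}
  add_mem' ha hb := ⟨add_mem ha.1 hb.1, fun v => add_mem (ha.2 v) (hb.2 v)⟩
  zero_mem' := ⟨zero_mem _, fun _ => zero_mem _⟩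
  neg_mem' ha := ⟨neg_mem ha.1, fun v => neg_mem (ha.2 v)⟩

theorem adelicIntSpan_subset_boxSet (S : Finset (HeightOneSpectrum (𝓞 ℚ))) :
    (adelicIntSpan d V : Set (Fin d → AdeleRing (𝓞 ℚ) ℚ)) ⊆ boxSet d V S :=
  fun _ ha => ⟨ha.1, fun v _ => ha.2 v, fun v _ => apply_mem_of_mem_intSpan V v (ha.2 v)⟩

theorem mem_adelicIntSpan_of_boxSet {a : Fin d → AdeleRing (𝓞 ℚ) ℚ} (ha : a ∈ boxSet d V ∅)
    (hsing : ∀ v, ∃ b ∈ boxSet d V {v}, (b : AdelicSolenoid d) = a) : a ∈ adelicIntSpan d V := by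
  refine ⟨ha.1, fun v => ?_⟩
  obtain ⟨b, hb, hba⟩ := hsing v
  obtain ⟨q, hq⟩ := QuotientAddGroup.eq.1 hba
  have hq_inf : ratDiag _ d q = -infPart d b + infPart d a := congrArg (infPart d) hq
  have hq_fin : ratDiag _ d q = -finPart d v b + finPart d v a := congrArg (finPart d v) hq
  have hbv : finPart d v b ∈ intSpan d V v := hb.2.1 v (Finset.mem_singleton_self v)
  have hqV : q ∈ V := mem_of_ratDiag_mem_span V (hq_inf ▸ add_mem (neg_mem hb.1) ha.1)
  have hq_int : ∀ i, v.valuation ℚ (q i) ≤ 1 := fun i => by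
    have h := add_mem (neg_mem (apply_mem_of_mem_intSpan V v hbv i))
      (ha.2.2 v (Finset.notMem_empty v) i)
    rw [← Pi.neg_apply, ← Pi.add_apply, ← hq_fin] at h
    exact (algebraMap_mem_adicCompletionIntegers_iff v _).1 h
  have hav : finPart d v a = finPart d v b + ratDiag _ d q := by rw [hq_fin, add_neg_cancel_left]
  rw [hav]
  exact add_mem hbv (ratDiag_mem_intSpan V v hqV hq_int)

theorem adelicIntSpan_subset_adeleSpan :
    (adelicIntSpan d V : Set (Fin d → AdeleRing (𝓞 ℚ) ℚ)) ⊆ adeleSpan d V := by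
  intro a ⟨ha_inf, ha_fin⟩
  obtain ⟨s, hs⟩ := latticePoints_fg V
  obtain ⟨c, hc⟩ := (Submodule.mem_span_image_finset_iff_exists_fun' _).1
    ((span_ratDiag_eq_span_finset V (InfiniteAdeleRing ℚ) hs).le ha_inf)
  choose c' hc' using fun v => (Submodule.mem_span_image_finset_iff_exists_fun' _).1
    ((intSpan_eq_span_finset V v hs).le (ha_fin v))
  let C : (Fin d → ℚ) → AdeleRing (𝓞 ℚ) ℚ := fun m =>
    (c m, ⟨fun v => c' v m, .of_forall fun v => (c' v m).2⟩)
  have ha : a = ∑ m ∈ s, C m • diagEmb d m :=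
    ext_infPart_finPart (hc.symm.trans (infPart_sum_smul_diagEmb s C fun m => m).symm)
      fun v => (hc' v).symm.trans (finPart_sum_smul_diagEmb v s C fun m => m).symm
  rw [ha]
  refine Submodule.sum_mem _ fun m hm => Submodule.smul_mem _ _ (Submodule.subset_span ?_)
  exact ⟨m, (hs ▸ Submodule.subset_span hm : m ∈ latticePoints V).1, rfl⟩

theorem smul_diagEmb_mem_adelicIntSpan {c : AdeleRing (𝓞 ℚ) ℚ}
    (hc : ∀ v, c.2 v ∈ v.adicCompletionIntegers ℚ) {m : Fin d → ℚ} (hm : m ∈ latticePoints V) :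
    c • diagEmb d m ∈ adelicIntSpan d V := by
  refine ⟨?_, fun v => ?_⟩
  · change c.1 • ratDiag _ d m ∈ infSpan d V
    exact Submodule.smul_mem _ c.1 (Submodule.subset_span ⟨m, hm.1, rfl⟩)
  · change (⟨c.2 v, hc v⟩ : v.adicCompletionIntegers ℚ) • ratDiag _ d m ∈ intSpan d V v
    exact Submodule.smul_mem _ _ (Submodule.subset_span ⟨m, hm, rfl⟩)

theorem adeleSpan_le_adelicIntSpan_sup_ratPoints :
    (adeleSpan d V).toAddSubgroup ≤ adelicIntSpan d V ⊔ ratPoints d := by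
  intro a ha
  change a ∈ Submodule.span _ (ratDiag _ d '' V) at ha
  rw [← span_ratDiag_latticePoints, ← Submodule.mem_toAddSubmonoid, Submodule.span_eq_closure] at ha
  refine AddSubmonoid.closure_le (S := (adelicIntSpan d V ⊔ ratPoints d).toAddSubmonoid).2 ?_ ha
  rintro _ ⟨c, -, _, ⟨m, hm, rfl⟩, rfl⟩
  obtain ⟨q, hq⟩ := FiniteAdeleRing.exists_forall_sub_mem_adicCompletionIntegers c.2
  have hsplit : c • diagEmb d m =
      (c - algebraMap ℚ (AdeleRing (𝓞 ℚ) ℚ) q) • diagEmb d m + diagEmb d (q • m) := by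
    rw [sub_smul, show diagEmb d (q • m) = algebraMap ℚ (AdeleRing (𝓞 ℚ) ℚ) q • diagEmb d m from
      (map_smul (ratDiag (AdeleRing (𝓞 ℚ) ℚ) d) q m).trans
        (algebraMap_smul (AdeleRing (𝓞 ℚ) ℚ) q (diagEmb d m)).symm, sub_add_cancel]
  have hint : ∀ v, (c - algebraMap ℚ (AdeleRing (𝓞 ℚ) ℚ) q).2 v ∈ v.adicCompletionIntegers ℚ :=
    fun v => by
      rw [show (c - algebraMap ℚ (AdeleRing (𝓞 ℚ) ℚ) q).2 = c.2 - algebraMap ℚ _ q from rfl]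
      exact hq v
  change c • diagEmb d m ∈ adelicIntSpan d V ⊔ ratPoints d
  rw [hsplit]
  exact AddSubgroup.add_mem_sup (smul_diagEmb_mem_adelicIntSpan V hint hm) ⟨q • m, rfl⟩

theorem stmt19_general (d : ℕ) (V : Submodule ℚ (Fin d → ℚ)) :
    ⋂ S : Finset (HeightOneSpectrum (𝓞 ℚ)),
      ((QuotientAddGroup.mk : (Fin d → AdeleRing (𝓞 ℚ) ℚ) → AdelicSolenoid d) '' boxSet d V S)
      = solSub d V := by
  ext x
  simp only [Set.mem_iInter]
  constructor
  · intro hx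
    obtain ⟨a, ha, rfl⟩ := hx ∅
    exact ⟨a, adelicIntSpan_subset_adeleSpan V (mem_adelicIntSpan_of_boxSet V ha fun v => hx {v}),
      rfl⟩
  · rintro ⟨a, ha, rfl⟩ S
    obtain ⟨b, hb, r, ⟨q, rfl⟩, rfl⟩ :=
      AddSubgroup.mem_sup.1 (adeleSpan_le_adelicIntSpan_sup_ratPoints V ha)
    exact ⟨b, adelicIntSpan_subset_boxSet V S hb, QuotientAddGroup.eq.2 ⟨q, by simp⟩⟩

theorem stmt19 (d : ℕ) (hd : 1 ≤ d) (V : Submodule ℚ (Fin d → ℚ)) :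
    ⋂ S : Finset (HeightOneSpectrum (𝓞 ℚ)),
      ((QuotientAddGroup.mk : (Fin d → AdeleRing (𝓞 ℚ) ℚ) → AdelicSolenoid d) '' boxSet d V S)
      = solSub d V :=
  stmt19_general d V
end
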